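/- Let q = N(μ, Σ) and p = N(μ₀, Σ₀) be Gaussians on ℝ^P, and suppose Σ = V_B M V_B^T for an orthonormal P×(P−N) matrix V_B and symmetric PSD M ∈ ℝ^{(P−N)×(P−N)}. Then the principal square root of Σ is V_B M^{1/2} V_B^T, and the principal square root of Σ^{1/2} Σ₀ Σ^{1/2} is V_B (M^{1/2} V_B^T Σ₀ V_B M^{1/2})^{1/2} V_B^T; consequently tr((Σ^{1/2} Σ₀ Σ^{1/2})^{1/2}) = tr((M^{1/2} V_B^T Σ₀ V_B M^{1/2})^{1/2}). -/

import Mathlib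

open Matrix

/-- The principal square root of a positive semidefinite matrix, as defined in Mathlib
(December 2024) under the name `Matrix.PosSemidef.sqrt`, since removed. -/
noncomputable def Matrix.PosSemidef.sqrt {n 𝕜 : Type*} [Fintype n] [RCLike 𝕜] [PartialOrder 𝕜] [DecidableEq n]
    {A : Matrix n n 𝕜} (hA : A.PosSemidef) : Matrix n n 𝕜 :=
  hA.1.eigenvectorUnitary.1 * diagonal ((↑) ∘ (√·) ∘ hA.1.eigenvalues) *
    (star hA.1.eigenvectorUnitary : Matrix n n 𝕜)

/-!
The square root of `V S Vᵀ`, for `V` with orthonormal columns, is `V S^{1/2} Vᵀ`: this matrix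
is positive semidefinite and squares to `V S Vᵀ` because `Vᵀ V = 1`, and a positive semidefinite
square root is unique. Applied to `Σ = V_B M V_Bᵀ`, and then to
`Σ^{1/2} Σ₀ Σ^{1/2} = V_B (M^{1/2} V_BᵀΣ₀V_B M^{1/2}) V_Bᵀ`, this gives both square roots;
the traces agree by cyclicity of the trace.
-/

namespace Matrix.PosSemidef

open scoped MatrixOrder

variable {m n : Type*} [Fintype m] [Fintype n] [DecidableEq m] [DecidableEq n]

theorem sqrt_eq_cfcSqrt {A : Matrix n n ℝ} (hA : A.PosSemidef) : hA.sqrt = CFC.sqrt A := by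
  rw [CFC.sqrt_eq_cfc, cfc_nnreal_eq_real _ A hA.nonneg, hA.1.cfc_eq]
  simp only [IsHermitian.cfc, Matrix.PosSemidef.sqrt, Unitary.conjStarAlgAut_apply]
  congr
  funext i
  rcases le_total 0 i with h | h <;> simp [h, Real.sqrt_eq_zero_of_nonpos]

theorem posSemidef_sqrt {A : Matrix n n ℝ} (hA : A.PosSemidef) : hA.sqrt.PosSemidef := by
  rw [hA.sqrt_eq_cfcSqrt]
  exact (CFC.sqrt_nonneg A).posSemidef

theorem sq_sqrt {A : Matrix n n ℝ} (hA : A.PosSemidef) : hA.sqrt ^ 2 = A := by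
  rw [hA.sqrt_eq_cfcSqrt]
  exact CFC.sq_sqrt A hA.nonneg

theorem eq_sqrt_of_sq_eq {A B : Matrix n n ℝ} (hB : B.PosSemidef) (hA : A.PosSemidef)
    (h : B ^ 2 = A) : B = hA.sqrt := by
  rw [hA.sqrt_eq_cfcSqrt, ← h]
  exact (CFC.sqrt_sq B hB.nonneg).symm

theorem sqrt_eq_mul_sqrt_mul_transpose {A : Matrix m m ℝ} (hA : A.PosSemidef)
    {S : Matrix n n ℝ} (hS : S.PosSemidef) {V : Matrix m n ℝ} (hV : Vᵀ * V = 1)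
    (hAS : A = V * S * Vᵀ) : hA.sqrt = V * hS.sqrt * Vᵀ := by
  have hpsd : (V * hS.sqrt * Vᵀ).PosSemidef := by
    simpa only [conjTranspose_eq_transpose_of_trivial] using
      hS.posSemidef_sqrt.mul_mul_conjTranspose_same V
  refine (hpsd.eq_sqrt_of_sq_eq hA ?_).symm
  calc (V * hS.sqrt * Vᵀ) ^ 2 = V * hS.sqrt * (Vᵀ * V) * hS.sqrt * Vᵀ := by
        simp only [sq, Matrix.mul_assoc]
    _ = A := by rw [hV, Matrix.mul_one, Matrix.mul_assoc V, ← sq, hS.sq_sqrt, hAS]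

end Matrix.PosSemidef

theorem stmt19_general {P N : ℕ}
    (VB : Matrix (Fin P) (Fin (P - N)) ℝ) (hVB : VBᵀ * VB = 1)
    (M : Matrix (Fin (P - N)) (Fin (P - N)) ℝ) (hM : M.PosSemidef)
    (C0 Sg : Matrix (Fin P) (Fin P) ℝ)
    (hSg : Sg.PosSemidef) (hEq : Sg = VB * M * VBᵀ)
    (hA : (hSg.sqrt * C0 * hSg.sqrt).PosSemidef)
    (hT : (hM.sqrt * (VBᵀ * C0 * VB) * hM.sqrt).PosSemidef) :
    hSg.sqrt = VB * hM.sqrt * VBᵀ ∧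
    hA.sqrt = VB * hT.sqrt * VBᵀ ∧
    hA.sqrt.trace = hT.sqrt.trace := by
  have hSgSqrt : hSg.sqrt = VB * hM.sqrt * VBᵀ := hSg.sqrt_eq_mul_sqrt_mul_transpose hM hVB hEq
  have hASqrt : hA.sqrt = VB * hT.sqrt * VBᵀ := by
    refine hA.sqrt_eq_mul_sqrt_mul_transpose hT hVB ?_
    rw [hSgSqrt]
    simp only [Matrix.mul_assoc]
  refine ⟨hSgSqrt, hASqrt, ?_⟩
  rw [hASqrt, trace_mul_cycle, hVB, Matrix.one_mul]

/-- If `Σ = V_B M V_Bᵀ` with `V_B` having orthonormal columns and `M` symmetric PSD,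
then the principal square root of `Σ` is `V_B M^{1/2} V_Bᵀ`, the principal square
root of `Σ^{1/2} Σ₀ Σ^{1/2}` is `V_B (M^{1/2} V_BᵀΣ₀V_B M^{1/2})^{1/2} V_Bᵀ`, and
hence `tr((Σ^{1/2}Σ₀Σ^{1/2})^{1/2}) = tr((M^{1/2} V_BᵀΣ₀V_B M^{1/2})^{1/2})`. -/
theorem stmt19 {P N : ℕ}
    (VB : Matrix (Fin P) (Fin (P - N)) ℝ) (hVB : VBᵀ * VB = 1)
    (M : Matrix (Fin (P - N)) (Fin (P - N)) ℝ) (hM : M.PosSemidef)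
    (C0 Sg : Matrix (Fin P) (Fin P) ℝ) (hC0 : C0.PosSemidef)
    (hSg : Sg.PosSemidef) (hEq : Sg = VB * M * VBᵀ)
    (hA : (hSg.sqrt * C0 * hSg.sqrt).PosSemidef)
    (hT : (hM.sqrt * (VBᵀ * C0 * VB) * hM.sqrt).PosSemidef) :
    hSg.sqrt = VB * hM.sqrt * VBᵀ ∧
    hA.sqrt = VB * hT.sqrt * VBᵀ ∧
    hA.sqrt.trace = hT.sqrt.trace :=
  stmt19_general VB hVB M hM C0 Sg hSg hEq hA hT
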